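/- Let f : V → [0,∞] be lower semicontinuous with respect to the weak topology of V, let A : V → W be a bounded linear operator, let d ∈ W, and define J(x) = f(x) + (1/2)‖Ax − d‖² and J_γ(x) = Q_γ(f)(x) + (1/2)‖Ax − d‖². If ‖A‖² < γ, then the set of global minimizers of J_γ equals the set of global minimizers of J, and the global minimum values of J and J_γ coincide. -/

import Mathlib

variable {V : Type*} [NormedAddCommGroup V] [InnerProductSpace ℝ V] [CompleteSpace V]
  [TopologicalSpace.SeparableSpace V]

/-- The quadratic envelope `Q_γ(f)`:
`Q_γ(f)(x) = sup { α − (γ/2)‖x−y‖² : α ∈ ℝ, y ∈ V, α − (γ/2)‖·−y‖² ≤ f }`. -/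
noncomputable def Qenv (γ : ℝ) (f : V → EReal) (x : V) : EReal :=
  sSup {v : EReal | ∃ α : ℝ, ∃ y : V,
    (∀ z : V, ((α - γ / 2 * ‖z - y‖ ^ 2 : ℝ) : EReal) ≤ f z) ∧
      v = ((α - γ / 2 * ‖x - y‖ ^ 2 : ℝ) : EReal)}

/-- The transform `S_γ(f)(y) = sup_x ( −f(x) − (γ/2)‖x−y‖² )`. -/
noncomputable def Senv (γ : ℝ) (f : V → EReal) (y : V) : EReal :=
  ⨆ x : V, (-(f x) - ((γ / 2 * ‖x - y‖ ^ 2 : ℝ) : EReal))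

/-- Convexity for extended-real-valued functions. -/
def ERealConvex (g : V → EReal) : Prop :=
  ∀ x y : V, ∀ a b : ℝ, 0 ≤ a → 0 ≤ b → a + b = 1 →
    g (a • x + b • y) ≤ (a : EReal) * g x + (b : EReal) * g y

/-- The lower semicontinuous convex envelope: the (pointwise) greatest lower semicontinuous
convex minorant of `g`. -/
noncomputable def convEnv (g : V → EReal) (x : V) : EReal :=
  ⨆ h : {h : V → EReal // LowerSemicontinuous h ∧ ERealConvex h ∧ ∀ z, h z ≤ g z}, h.1 x

/-- Lower semicontinuity with respect to the weak topology of `V`. -/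
def WeaklyLSC (g : V → EReal) : Prop :=
  LowerSemicontinuous (fun x : WeakSpace ℝ V => g x)

/-- `h` is coercive iff all its sublevel sets are bounded. -/
def Coercive (h : V → EReal) : Prop :=
  ∀ c : ℝ, Bornology.IsBounded {x : V | h x ≤ (c : EReal)}


/-- `J(x) = f(x) + (1/2)‖Ax − d‖²`. -/
noncomputable def Jfun {W : Type*} [NormedAddCommGroup W] [InnerProductSpace ℝ W]
    (f : V → EReal) (A : V →L[ℝ] W) (d : W) (x : V) : EReal :=
  f x + ((1 / 2 * ‖A x - d‖ ^ 2 : ℝ) : EReal)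

/-- `J_γ(x) = Q_γ(f)(x) + (1/2)‖Ax − d‖²`. -/
noncomputable def Jgamma {W : Type*} [NormedAddCommGroup W] [InnerProductSpace ℝ W]
    (γ : ℝ) (f : V → EReal) (A : V →L[ℝ] W) (d : W) (x : V) : EReal :=
  Qenv γ f x + ((1 / 2 * ‖A x - d‖ ^ 2 : ℝ) : EReal)

/-!
Always `Q_γ(f) ≤ f`, so `J_γ ≤ J`. Conversely, linearizing the data term at `u` turns a
lower bound `μ ≤ J` into a concave quadratic minorant of `f` of curvature `‖A‖² ≤ γ` taking
the value `μ - ½‖Au - d‖²` at `u`; completing the square dominates it by a minorant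
`α - (γ/2)‖· - y‖²` with the same value at `u`, so `μ ≤ J_γ(u)`. At a minimizer `x` of `J_γ`
the same construction gives a minorant touching `Q_γ(f)` at `x`, and now the curvature `‖A‖²`
is strictly below `γ`: if `f(x)` exceeded `Q_γ(f)(x)`, lower semicontinuity and the curvature
gap would let the corresponding `γ`-quadratic be raised by a positive constant.
Hence `J(x) = J_γ(x)`.
-/

open scoped RealInnerProductSpace

lemma EReal.coe_le_add_coe_iff {a c : ℝ} {e : EReal} :
    (a : EReal) ≤ e + c ↔ ((a - c : ℝ) : EReal) ≤ e := by
  rw [EReal.coe_sub]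
  exact (EReal.sub_le_iff_le_add (.inl (EReal.coe_ne_bot c)) (.inl (EReal.coe_ne_top c))).symm

open Filter Topology in
lemma exists_pos_add_le_of_lowerSemicontinuousAt {X : Type*} [PseudoMetricSpace X]
    {f : X → EReal} {q : X → ℝ} {x : X} {c : ℝ} (hf : LowerSemicontinuousAt f x)
    (hq : ContinuousAt q x) (hx : (q x : EReal) < f x) (hc : 0 < c)
    (hle : ∀ z, ((q z + c * dist z x ^ 2 : ℝ) : EReal) ≤ f z) :
    ∃ η > 0, ∀ z, ((q z + η : ℝ) : EReal) ≤ f z := by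
  obtain ⟨s, hqs, hsf⟩ := EReal.exists_between_coe_real hx
  have hqs : q x < s := EReal.coe_lt_coe_iff.1 hqs
  set ε := (s - q x) / 2 with hε
  have hnear : ∀ᶠ z in 𝓝 x, (s : EReal) < f z ∧ q z < q x + ε :=
    (hf s hsf).and (hq.eventually (Iio_mem_nhds (by linarith [hε])))
  obtain ⟨δ, hδ, hball⟩ := Metric.eventually_nhds_iff.1 hnear
  refine ⟨min ε (c * δ ^ 2), by positivity, fun z => ?_⟩
  rcases lt_or_ge (dist z x) δ with hz | hz
  · obtain ⟨hfz, hqz⟩ := hball hz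
    refine le_trans (EReal.coe_le_coe_iff.2 ?_) hfz.le
    linarith [min_le_left ε (c * δ ^ 2), hε]
  · refine le_trans (EReal.coe_le_coe_iff.2 ?_) (hle z)
    have : c * δ ^ 2 ≤ c * dist z x ^ 2 := by gcongr
    linarith [min_le_right ε (c * δ ^ 2)]

section QuadraticEnvelope

variable {E : Type*} [NormedAddCommGroup E] {γ : ℝ} {f : E → EReal}

lemma Qenv_le_self (x : E) : Qenv γ f x ≤ f x :=
  sSup_le fun _ ⟨_, _, hm, hv⟩ => hv ▸ hm x

lemma le_Qenv {α : ℝ} {y : E} (hm : ∀ z, ((α - γ / 2 * ‖z - y‖ ^ 2 : ℝ) : EReal) ≤ f z)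
    (x : E) : ((α - γ / 2 * ‖x - y‖ ^ 2 : ℝ) : EReal) ≤ Qenv γ f x :=
  le_sSup ⟨α, y, hm, rfl⟩

variable [InnerProductSpace ℝ E]

lemma WeaklyLSC.lowerSemicontinuous (h : WeaklyLSC f) : LowerSemicontinuous f :=
  h.comp (g := toWeakSpaceCLM ℝ E) (toWeakSpaceCLM ℝ E).continuous

lemma add_inner_sub_half_sq_eq (hγ : γ ≠ 0) (r : ℝ) (b x z : E) :
    r + ⟪b, z - x⟫ - γ / 2 * ‖z - x‖ ^ 2 =
      r + ‖b‖ ^ 2 / (2 * γ) - γ / 2 * ‖z - (x + γ⁻¹ • b)‖ ^ 2 := by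
  rw [show z - (x + γ⁻¹ • b) = (z - x) - γ⁻¹ • b by abel, norm_sub_sq_real (z - x),
    real_inner_smul_right, norm_smul, Real.norm_eq_abs, mul_pow, sq_abs, real_inner_comm]
  field_simp
  ring

lemma le_Qenv_of_forall_le {κ r : ℝ} {b x : E} (hγ : 0 < γ) (hκ : κ ≤ γ)
    (h : ∀ z, ((r + ⟪b, z - x⟫ - κ / 2 * ‖z - x‖ ^ 2 : ℝ) : EReal) ≤ f z) :
    (r : EReal) ≤ Qenv γ f x := by
  have hsq := add_inner_sub_half_sq_eq hγ.ne' r b x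
  have hm (z : E) :
      ((r + ‖b‖ ^ 2 / (2 * γ) - γ / 2 * ‖z - (x + γ⁻¹ • b)‖ ^ 2 : ℝ) : EReal) ≤ f z := by
    refine le_trans (EReal.coe_le_coe_iff.2 ?_) (h z)
    rw [← hsq]
    nlinarith [sq_nonneg ‖z - x‖]
  convert le_Qenv hm x using 2
  rw [← hsq]
  simp

lemma Qenv_nonneg (hγ : 0 < γ) (hf : ∀ z, 0 ≤ f z) (x : E) : 0 ≤ Qenv γ f x :=
  le_Qenv_of_forall_le (b := 0) (κ := 0) hγ hγ.le fun z => by simpa using hf z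

lemma le_of_Qenv_le {κ r : ℝ} {b x : E} (hγ : 0 < γ) (hκ : κ < γ)
    (hf : LowerSemicontinuousAt f x)
    (h : ∀ z, ((r + ⟪b, z - x⟫ - κ / 2 * ‖z - x‖ ^ 2 : ℝ) : EReal) ≤ f z)
    (hQ : Qenv γ f x ≤ r) : f x ≤ r := by
  by_contra! hlt
  -- The curvature gap `γ - κ` and lower semicontinuity let us lift the `γ`-quadratic `q`.
  set q : E → ℝ := fun z => r + ⟪b, z - x⟫ - γ / 2 * ‖z - x‖ ^ 2
  have hqx : q x = r := by simp [q]
  have hq : Continuous q := by fun_prop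
  obtain ⟨η, hη, hqη⟩ := exists_pos_add_le_of_lowerSemicontinuousAt hf hq.continuousAt
    (hqx ▸ hlt) (c := (γ - κ) / 2) (by linarith) fun z => by
      convert h z using 2
      rw [dist_eq_norm]
      ring
  have hrη : ((r + η : ℝ) : EReal) ≤ Qenv γ f x :=
    le_Qenv_of_forall_le hγ le_rfl fun z => by
      convert hqη z using 2
      ring
  have := EReal.coe_le_coe_iff.1 (hrη.trans hQ)
  linarith

end QuadraticEnvelope

section LeastSquares

variable {E F : Type*} [NormedAddCommGroup E] [InnerProductSpace ℝ E] [NormedAddCommGroup F]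
  [InnerProductSpace ℝ F] {γ : ℝ} {f : E → EReal} {A : E →L[ℝ] F} {d : F}

lemma half_norm_sq_sub_le (A : E →L[ℝ] F) (d : F) (x z : E) :
    1 / 2 * ‖A z - d‖ ^ 2 ≤
      1 / 2 * ‖A x - d‖ ^ 2 + ⟪A x - d, A (z - x)⟫ + ‖A‖ ^ 2 / 2 * ‖z - x‖ ^ 2 := by
  have hA : ‖A (z - x)‖ ^ 2 ≤ ‖A‖ ^ 2 * ‖z - x‖ ^ 2 := by
    rw [← mul_pow]
    exact pow_le_pow_left₀ (norm_nonneg _) (A.le_opNorm _) 2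
  have hsplit : A z - d = (A x - d) + A (z - x) := by rw [map_sub]; abel
  rw [hsplit, norm_add_sq_real]
  linarith

lemma exists_forall_le_of_le_Jfun [CompleteSpace E] {r : ℝ} {x : E}
    (h : ∀ z, ((r + 1 / 2 * ‖A x - d‖ ^ 2 : ℝ) : EReal) ≤ Jfun f A d z) :
    ∃ b : E, ∀ z, ((r + ⟪b, z - x⟫ - ‖A‖ ^ 2 / 2 * ‖z - x‖ ^ 2 : ℝ) : EReal) ≤ f z := by
  -- `b` is the Riesz representative of minus the derivative of the data term at `x`.
  refine ⟨-(InnerProductSpace.toDual ℝ E).symm ((innerSL ℝ (A x - d)).comp A), fun z => ?_⟩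
  refine le_trans (EReal.coe_le_coe_iff.2 ?_) (EReal.coe_le_add_coe_iff.1 (h z))
  rw [inner_neg_left, InnerProductSpace.toDual_symm_apply]
  simp only [ContinuousLinearMap.comp_apply, innerSL_apply_apply]
  linarith [half_norm_sq_sub_le A d x z]

lemma Jgamma_le_Jfun (x : E) : Jgamma γ f A d x ≤ Jfun f A d x :=
  add_le_add_left (Qenv_le_self x) _

variable [CompleteSpace E]

lemma le_Jgamma_of_forall_le_Jfun (hγ : 0 < γ) (hA : ‖A‖ ^ 2 ≤ γ) {μ : EReal}
    (h : ∀ z, μ ≤ Jfun f A d z) (x : E) : μ ≤ Jgamma γ f A d x := by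
  refine EReal.ge_of_forall_gt_iff_ge.1 fun m hm => ?_
  obtain ⟨b, hb⟩ := exists_forall_le_of_le_Jfun (f := f) (A := A) (d := d)
    (r := m - 1 / 2 * ‖A x - d‖ ^ 2) (x := x) fun z => by
      rw [sub_add_cancel]
      exact hm.le.trans (h z)
  exact EReal.coe_le_add_coe_iff.2 (le_Qenv_of_forall_le hγ hA hb)

lemma Jfun_le_Jgamma_of_forall_Jgamma_le (hA : ‖A‖ ^ 2 < γ) (hf0 : ∀ z, 0 ≤ f z)
    (hf : LowerSemicontinuous f) {x : E} (hx : ∀ y, Jgamma γ f A d x ≤ Jgamma γ f A d y) :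
    Jfun f A d x ≤ Jgamma γ f A d x := by
  have hγ : 0 < γ := (sq_nonneg ‖A‖).trans_lt hA
  suffices f x ≤ Qenv γ f x from add_le_add_left this _
  by_cases htop : Qenv γ f x = ⊤
  · exact htop ▸ le_top
  have hbot : Qenv γ f x ≠ ⊥ := ne_bot_of_le_ne_bot EReal.zero_ne_bot (Qenv_nonneg hγ hf0 x)
  obtain ⟨r, hr⟩ : ∃ r : ℝ, Qenv γ f x = r := ⟨_, (EReal.coe_toReal htop hbot).symm⟩
  obtain ⟨b, hb⟩ := exists_forall_le_of_le_Jfun (r := r) (x := x) fun z => by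
    rw [EReal.coe_add, ← hr]
    exact (hx z).trans (Jgamma_le_Jfun z)
  rw [hr]
  exact le_of_Qenv_le hγ hA (hf x) hb hr.le

end LeastSquares

theorem stmt_18_general {W : Type*} [NormedAddCommGroup W] [InnerProductSpace ℝ W]
    (f : V → EReal) (hf0 : ∀ x, 0 ≤ f x) (hwlsc : WeaklyLSC f)
    (A : V →L[ℝ] W) (d : W) (γ : ℝ) (hA : ‖A‖ ^ 2 < γ) :
    {x : V | ∀ y, Jgamma γ f A d x ≤ Jgamma γ f A d y} =
      {x : V | ∀ y, Jfun f A d x ≤ Jfun f A d y} ∧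
    (⨅ x : V, Jgamma γ f A d x) = ⨅ x : V, Jfun f A d x := by
  have hγ : 0 < γ := (sq_nonneg ‖A‖).trans_lt hA
  have hle : ∀ x, Jgamma γ f A d x ≤ Jfun f A d x := Jgamma_le_Jfun
  have hge : ∀ {μ : EReal}, (∀ z, μ ≤ Jfun f A d z) → ∀ x, μ ≤ Jgamma γ f A d x :=
    le_Jgamma_of_forall_le_Jfun hγ hA.le
  refine ⟨Set.ext fun x => ⟨fun hx y => ?_, fun hx y => ?_⟩,
    le_antisymm (iInf_mono hle) (le_iInf (hge fun z => iInf_le _ z))⟩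
  · calc Jfun f A d x ≤ Jgamma γ f A d x :=
          Jfun_le_Jgamma_of_forall_Jgamma_le hA hf0 hwlsc.lowerSemicontinuous hx
      _ ≤ Jgamma γ f A d y := hx y
      _ ≤ Jfun f A d y := hle y
  · exact (hle x).trans (hge hx y)

theorem stmt_18 {W : Type*} [NormedAddCommGroup W] [InnerProductSpace ℝ W] [CompleteSpace W]
    [TopologicalSpace.SeparableSpace W]
    (f : V → EReal) (hf0 : ∀ x, 0 ≤ f x) (hwlsc : WeaklyLSC f)
    (A : V →L[ℝ] W) (d : W) (γ : ℝ) (hA : ‖A‖ ^ 2 < γ) :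
    {x : V | ∀ y, Jgamma γ f A d x ≤ Jgamma γ f A d y} =
      {x : V | ∀ y, Jfun f A d x ≤ Jfun f A d y} ∧
    (⨅ x : V, Jgamma γ f A d x) = ⨅ x : V, Jfun f A d x :=
  stmt_18_general f hf0 hwlsc A d γ hA
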